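/- arXiv:2512.03222 — 2 statements merged into one kernel-verified Lean document; each statement's English description precedes it below -/
import Mathlib

section
/- Let F = A − B₁K₁* ∈ ℝ^{n×n} for given A ∈ ℝ^{n×n}, B₁ ∈ ℝ^{n×m}, K₁* ∈ ℝ^{m×n}; let B₂ ∈ ℝ^{n×m}, K₂* ∈ ℝ^{m×n}, let Q_a ∈ ℝ^{n×n} and R̃₂ ∈ ℝ^{m×m} be symmetric positive definite, ρ > 0, and suppose P° ∈ ℝ^{n×n} is a symmetric matrix satisfying FᵀP° + P°F + Q_a + ρK₂*ᵀK₂* − (P°B₂ + ρK₂*ᵀ)(R̃₂ + ρI)⁻¹(B₂ᵀP° + ρK₂*) = 0. Define K₂° = (R̃₂ + ρI)⁻¹(B₂ᵀP° + ρK₂*). Then for every continuous input v : [0,∞) → ℝ^m, every C¹ solution e of ė = Fe + B₂v, and every T > 0: ∫₀^T (e(t)ᵀQ_a e(t) + v(t)ᵀR̃₂ v(t) + ρ(v(t) + K₂*e(t))ᵀ(v(t) + K₂*e(t))) dt = e(0)ᵀP°e(0) − e(T)ᵀP°e(T) + ∫₀^T (v(t) + K₂°e(t))ᵀ(R̃₂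 + ρI)(v(t) + K₂°e(t)) dt. Consequently, if e(T) → 0 as T → ∞, the total cost is at least e(0)ᵀP°e(0), with equality if v(t) = −K₂°e(t) for all t. -/
/-! Along a trajectory of `ė = Fe + B₂v`, the Riccati equation turns the stage cost into
`-(d/dt) eᵀP°e` plus the square `(v + K₂°e)ᵀ(R̃₂ + ρI)(v + K₂°e)`; integrating over `[0, T]` gives
the finite-horizon identity. The square is nonnegative and `e(T)ᵀP°e(T) → 0`, so letting `T → ∞`
bounds the cost below by `e(0)ᵀP°e(0)`, with equality when `v = -K₂°e` makes the square vanish. -/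

open Matrix MeasureTheory intervalIntegral Filter

open Set Topology

namespace Matrix

variable {ι κ α : Type*} [Fintype ι] [Fintype κ] [CommRing α]

lemma mulVec_dotProduct (A : Matrix κ ι α) (x : ι → α) (y : κ → α) :
    A *ᵥ x ⬝ᵥ y = x ⬝ᵥ Aᵀ *ᵥ y := by
  rw [dotProduct_transpose_mulVec, dotProduct_comm]

lemma IsSymm.dotProduct_mulVec_comm {S : Matrix ι ι α} (hS : S.IsSymm) (x y : ι → α) :
    x ⬝ᵥ S *ᵥ y = y ⬝ᵥ S *ᵥ x := by
  rw [← dotProduct_transpose_mulVec, hS.eq]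

lemma IsSymm.add_dotProduct_mulVec_add {S : Matrix ι ι α} (hS : S.IsSymm) (x y : ι → α) :
    (x + y) ⬝ᵥ S *ᵥ (x + y) = x ⬝ᵥ S *ᵥ x + 2 * (x ⬝ᵥ S *ᵥ y) + y ⬝ᵥ S *ᵥ y := by
  rw [mulVec_add, add_dotProduct, dotProduct_add, dotProduct_add, hS.dotProduct_mulVec_comm y x]
  ring

end Matrix

section Continuity

variable {ι κ X R : Type*} [Fintype ι] [TopologicalSpace X] [TopologicalSpace R] [NonUnitalNonAssocSemiring R]
  [ContinuousAdd R] [ContinuousMul R]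

@[fun_prop]
theorem ContinuousOn.dotProduct {f g : X → ι → R} {s : Set X} (hf : ContinuousOn f s)
    (hg : ContinuousOn g s) : ContinuousOn (fun t => f t ⬝ᵥ g t) s := by
  rw [continuousOn_iff_continuous_domRestrict] at *
  exact hf.dotProduct hg

@[fun_prop]
theorem ContinuousOn.matrix_mulVec (M : Matrix κ ι R) {f : X → ι → R} {s : Set X}
    (hf : ContinuousOn f s) : ContinuousOn (fun t => M *ᵥ f t) s := by
  rw [continuousOn_iff_continuous_domRestrict] at *
  exact continuous_const.matrix_mulVec hf

end Continuity

section Derivatives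

variable {ι κ 𝕜 : Type*} [Fintype ι] [NontriviallyNormedField 𝕜]

theorem HasDerivAt.dotProduct {f g : 𝕜 → ι → 𝕜} {f' g' : ι → 𝕜} {t : 𝕜}
    (hf : HasDerivAt f f' t) (hg : HasDerivAt g g' t) :
    HasDerivAt (fun s => f s ⬝ᵥ g s) (f' ⬝ᵥ g t + f t ⬝ᵥ g') t := by
  simp only [_root_.dotProduct, ← Finset.sum_add_distrib]
  exact HasDerivAt.fun_sum fun i _ => (hasDerivAt_pi.1 hf i).mul (hasDerivAt_pi.1 hg i)

theorem HasDerivAt.matrix_mulVec (M : Matrix κ ι 𝕜) {f : 𝕜 → ι → 𝕜} {f' : ι → 𝕜} {t : 𝕜}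
    (hf : HasDerivAt f f' t) : HasDerivAt (fun s => M *ᵥ f s) (M *ᵥ f') t :=
  hasDerivAt_pi.2 fun i => by
    have h := (hasDerivAt_const t (M i)).dotProduct hf
    rwa [zero_dotProduct, zero_add] at h

end Derivatives

theorem tendsto_ofReal_intervalIntegral_lintegral_Ioi {f : ℝ → ℝ} {a : ℝ}
    (hf : ContinuousOn f (Ici a)) (hf_nonneg : ∀ t ∈ Ioi a, 0 ≤ f t) :
    Tendsto (fun T => ENNReal.ofReal (∫ t in a..T, f t)) atTop
      (𝓝 (∫⁻ t in Ioi a, ENNReal.ofReal (f t))) := by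
  have hcover : AECover (volume.restrict (Ioi a)) atTop Iic := aecover_Iic tendsto_id
  refine (hcover.lintegral_tendsto_of_countably_generated ?_).congr' ?_
  · exact ((hf.mono Ioi_subset_Ici_self).aemeasurable measurableSet_Ioi).ennreal_ofReal
  filter_upwards [eventually_ge_atTop a] with T haT
  rw [Measure.restrict_restrict measurableSet_Iic, Iic_inter_Ioi, integral_of_le haT,
    ofReal_integral_eq_lintegral_ofReal]
  · exact (hf.mono Icc_subset_Ici_self).integrableOn_compact isCompact_Icc
      |>.mono_set Ioc_subset_Icc_self
  · exact (ae_restrict_iff' measurableSet_Ioc).2 (.of_forall fun t ht => hf_nonneg t ht.1)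

theorem ofReal_le_lintegral_Ioi_of_le_intervalIntegral {f h : ℝ → ℝ} {a L : ℝ}
    (hf : ContinuousOn f (Ici a)) (hf_nonneg : ∀ t ∈ Ioi a, 0 ≤ f t)
    (hh : Tendsto h atTop (𝓝 L)) (hle : ∀ᶠ T in atTop, h T ≤ ∫ t in a..T, f t) :
    ENNReal.ofReal L ≤ ∫⁻ t in Ioi a, ENNReal.ofReal (f t) :=
  le_of_tendsto_of_tendsto ((ENNReal.continuous_ofReal.tendsto L).comp hh)
    (tendsto_ofReal_intervalIntegral_lintegral_Ioi hf hf_nonneg)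
    (hle.mono fun _ hT => ENNReal.ofReal_le_ofReal hT)

theorem lintegral_Ioi_ofReal_eq_of_tendsto {f : ℝ → ℝ} {a L : ℝ}
    (hf : ContinuousOn f (Ici a)) (hf_nonneg : ∀ t ∈ Ioi a, 0 ≤ f t)
    (hL : Tendsto (fun T => ∫ t in a..T, f t) atTop (𝓝 L)) :
    ∫⁻ t in Ioi a, ENNReal.ofReal (f t) = ENNReal.ofReal L :=
  tendsto_nhds_unique (tendsto_ofReal_intervalIntegral_lintegral_Ioi hf hf_nonneg)
    ((ENNReal.continuous_ofReal.tendsto L).comp hL)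

section Riccati

variable {ι κ α : Type*} [Fintype ι] [Fintype κ] [DecidableEq κ] [CommRing α]

theorem riccati_gain_form {F P Q : Matrix ι ι α} {B : Matrix ι κ α}
    {K L : Matrix κ ι α} {S : Matrix κ κ α} {ρ : α}
    (hP : P.IsSymm) (hS : S.IsSymm) (hSdet : IsUnit S.det)
    (hRic : Fᵀ * P + P * F + Q + ρ • (Kᵀ * K)
      - (P * B + ρ • Kᵀ) * S⁻¹ * (Bᵀ * P + ρ • K) = 0)
    (hL : L = S⁻¹ * (Bᵀ * P + ρ • K)) :
    Fᵀ * P + P * F + Q + ρ • (Kᵀ * K) = Lᵀ * (S * L) := by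
  rw [sub_eq_zero.mp hRic, hL, mul_nonsing_inv_cancel_left _ _ hSdet, transpose_mul,
    transpose_nonsing_inv, hS.eq, transpose_add, transpose_mul, transpose_smul, hP.eq,
    transpose_transpose, Matrix.mul_assoc]

theorem riccati_completion_of_squares {F P Q : Matrix ι ι α} {B : Matrix ι κ α}
    {K L : Matrix κ ι α} {R : Matrix κ κ α} {ρ : α} (hP : P.IsSymm) (hR : R.IsSymm)
    (hSL : (R + ρ • 1) * L = Bᵀ * P + ρ • K)
    (hRic : Fᵀ * P + P * F + Q + ρ • (Kᵀ * K) = Lᵀ * ((R + ρ • 1) * L))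
    (x : ι → α) (u : κ → α) :
    x ⬝ᵥ Q *ᵥ x + u ⬝ᵥ R *ᵥ u + ρ * ((u + K *ᵥ x) ⬝ᵥ (u + K *ᵥ x))
      = -((F *ᵥ x + B *ᵥ u) ⬝ᵥ P *ᵥ x + x ⬝ᵥ P *ᵥ (F *ᵥ x + B *ᵥ u))
        + (u + L *ᵥ x) ⬝ᵥ (R + ρ • 1) *ᵥ (u + L *ᵥ x) := by
  have hS : (R + ρ • 1).IsSymm := hR.add (isSymm_one.smul ρ)
  have hflow : (F *ᵥ x + B *ᵥ u) ⬝ᵥ P *ᵥ x + x ⬝ᵥ P *ᵥ (F *ᵥ x + B *ᵥ u)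
      = x ⬝ᵥ (Fᵀ * P + P * F) *ᵥ x + 2 * (u ⬝ᵥ (Bᵀ * P) *ᵥ x) := by
    rw [add_dotProduct, mulVec_add, dotProduct_add, hP.dotProduct_mulVec_comm x (B *ᵥ u),
      add_mulVec, dotProduct_add, ← mulVec_mulVec, ← mulVec_mulVec, ← mulVec_mulVec,
      ← mulVec_dotProduct, ← mulVec_dotProduct]
    ring
  have hsq := hS.add_dotProduct_mulVec_add u (L *ᵥ x)
  rw [mulVec_dotProduct, mulVec_mulVec, mulVec_mulVec x Lᵀ, ← hRic, hSL] at hsq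
  have hK := (isSymm_one (n := κ) (α := α)).add_dotProduct_mulVec_add u (K *ᵥ x)
  rw [one_mulVec, one_mulVec, one_mulVec, mulVec_dotProduct, mulVec_mulVec] at hK
  rw [hflow, hsq, hK]
  simp only [add_mulVec, smul_mulVec, one_mulVec, dotProduct_add, dotProduct_smul, smul_eq_mul]
  ring

theorem integral_cost_eq_of_riccati {F P Q : Matrix ι ι ℝ} {B : Matrix ι κ ℝ}
    {K L : Matrix κ ι ℝ} {R : Matrix κ κ ℝ} {ρ : ℝ} (hP : P.IsSymm) (hR : R.IsSymm)
    (hSL : (R + ρ • 1) * L = Bᵀ * P + ρ • K)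
    (hRic : Fᵀ * P + P * F + Q + ρ • (Kᵀ * K) = Lᵀ * ((R + ρ • 1) * L))
    {v : ℝ → κ → ℝ} {e : ℝ → ι → ℝ} {a b : ℝ} (hab : a ≤ b) (hv : ContinuousOn v (Icc a b))
    (he : ∀ t ∈ Icc a b, HasDerivAt e (F *ᵥ e t + B *ᵥ v t) t) :
    ∫ t in a..b, (e t ⬝ᵥ Q *ᵥ e t + v t ⬝ᵥ R *ᵥ v t
        + ρ * ((v t + K *ᵥ e t) ⬝ᵥ (v t + K *ᵥ e t)))
      = e a ⬝ᵥ P *ᵥ e a - e b ⬝ᵥ P *ᵥ e b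
        + ∫ t in a..b, (v t + L *ᵥ e t) ⬝ᵥ (R + ρ • 1) *ᵥ (v t + L *ᵥ e t) := by
  have he_cont : ContinuousOn e (Icc a b) := fun t ht => (he t ht).continuousAt.continuousWithinAt
  rw [← uIcc_of_le hab] at hv he he_cont
  have hlyap : ∫ t in a..b, ((F *ᵥ e t + B *ᵥ v t) ⬝ᵥ P *ᵥ e t
      + e t ⬝ᵥ P *ᵥ (F *ᵥ e t + B *ᵥ v t)) = e b ⬝ᵥ P *ᵥ e b - e a ⬝ᵥ P *ᵥ e a :=
    integral_eq_sub_of_hasDerivAt (fun t ht => (he t ht).dotProduct ((he t ht).matrix_mulVec P))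
      (ContinuousOn.intervalIntegrable (by fun_prop))
  simp_rw [riccati_completion_of_squares hP hR hSL hRic, neg_add_eq_sub]
  rw [integral_sub (ContinuousOn.intervalIntegrable (by fun_prop))
    (ContinuousOn.intervalIntegrable (by fun_prop)), hlyap]
  ring

end Riccati

theorem insider_best_response_completion_of_squares_general {n m : ℕ}
    (B₂ : Matrix (Fin n) (Fin m) ℝ)
    (K₂ : Matrix (Fin m) (Fin n) ℝ)
    (F : Matrix (Fin n) (Fin n) ℝ)
    (Qa : Matrix (Fin n) (Fin n) ℝ) (hQa : Qa.PosDef)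
    (R₂t : Matrix (Fin m) (Fin m) ℝ) (hR₂t : R₂t.PosDef)
    (ρ : ℝ) (hρ : 0 < ρ)
    (Pd : Matrix (Fin n) (Fin n) ℝ) (hPdsymm : Pd.IsSymm)
    (hRic : Fᵀ * Pd + Pd * F + Qa + ρ • (K₂ᵀ * K₂)
      - (Pd * B₂ + ρ • K₂ᵀ) * (R₂t + ρ • (1 : Matrix (Fin m) (Fin m) ℝ))⁻¹
          * (B₂ᵀ * Pd + ρ • K₂) = 0)
    (K₂d : Matrix (Fin m) (Fin n) ℝ)
    (hK₂d : K₂d = (R₂t + ρ • (1 : Matrix (Fin m) (Fin m) ℝ))⁻¹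
      * (B₂ᵀ * Pd + ρ • K₂))
    (v : ℝ → Fin m → ℝ) (hv : Continuous v)
    (e : ℝ → Fin n → ℝ)
    (he : ∀ t, 0 ≤ t → HasDerivAt e (F *ᵥ e t + B₂ *ᵥ v t) t) :
    (∀ T > (0:ℝ),
      (∫ t in (0:ℝ)..T,
          (e t ⬝ᵥ Qa *ᵥ e t + v t ⬝ᵥ R₂t *ᵥ v t
            + ρ * ((v t + K₂ *ᵥ e t) ⬝ᵥ (v t + K₂ *ᵥ e t))))
        = e 0 ⬝ᵥ Pd *ᵥ e 0 - e T ⬝ᵥ Pd *ᵥ e T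
          + ∫ t in (0:ℝ)..T,
              (v t + K₂d *ᵥ e t) ⬝ᵥ
                (R₂t + ρ • (1 : Matrix (Fin m) (Fin m) ℝ)) *ᵥ (v t + K₂d *ᵥ e t)) ∧
    (Tendsto e atTop (nhds 0) →
      (ENNReal.ofReal (e 0 ⬝ᵥ Pd *ᵥ e 0)
          ≤ ∫⁻ t in Set.Ioi (0:ℝ),
              ENNReal.ofReal (e t ⬝ᵥ Qa *ᵥ e t + v t ⬝ᵥ R₂t *ᵥ v t
                + ρ * ((v t + K₂ *ᵥ e t) ⬝ᵥ (v t + K₂ *ᵥ e t)))) ∧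
      ((∀ t, 0 ≤ t → v t = -(K₂d *ᵥ e t)) →
        (∫⁻ t in Set.Ioi (0:ℝ),
            ENNReal.ofReal (e t ⬝ᵥ Qa *ᵥ e t + v t ⬝ᵥ R₂t *ᵥ v t
              + ρ * ((v t + K₂ *ᵥ e t) ⬝ᵥ (v t + K₂ *ᵥ e t))))
          = ENNReal.ofReal (e 0 ⬝ᵥ Pd *ᵥ e 0))) := by
  have hS : (R₂t + ρ • (1 : Matrix (Fin m) (Fin m) ℝ)).PosDef :=
    hR₂t.add_posSemidef (PosSemidef.one.smul hρ.le)
  have hSdet := (isUnit_iff_isUnit_det _).1 hS.isUnit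
  have hSL : (R₂t + ρ • 1) * K₂d = B₂ᵀ * Pd + ρ • K₂ := by
    rw [hK₂d, mul_nonsing_inv_cancel_left _ _ hSdet]
  have hcost := fun T (hT : 0 ≤ T) => integral_cost_eq_of_riccati hPdsymm
    (isHermitian_iff_isSymm.1 hR₂t.isHermitian) hSL
    (riccati_gain_form hPdsymm (isHermitian_iff_isSymm.1 hS.isHermitian) hSdet hRic hK₂d)
    hT hv.continuousOn fun t ht => he t ht.1
  refine ⟨fun T hT => hcost T hT.le, fun he_lim => ?_⟩
  have he_cont : ContinuousOn e (Ici 0) := fun t ht => (he t ht).continuousAt.continuousWithinAt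
  have hcost_nonneg : ∀ t ∈ Ioi (0:ℝ), 0 ≤ e t ⬝ᵥ Qa *ᵥ e t + v t ⬝ᵥ R₂t *ᵥ v t
      + ρ * ((v t + K₂ *ᵥ e t) ⬝ᵥ (v t + K₂ *ᵥ e t)) := fun t _ =>
    add_nonneg (add_nonneg (by simpa using hQa.posSemidef.dotProduct_mulVec_nonneg (e t))
        (by simpa using hR₂t.posSemidef.dotProduct_mulVec_nonneg (v t)))
      (mul_nonneg hρ.le (by simpa using dotProduct_star_self_nonneg (v t + K₂ *ᵥ e t)))
  have hV : Tendsto (fun T => e 0 ⬝ᵥ Pd *ᵥ e 0 - e T ⬝ᵥ Pd *ᵥ e T) atTop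
      (𝓝 (e 0 ⬝ᵥ Pd *ᵥ e 0)) := by
    simpa using tendsto_const_nhds.sub
      (((continuous_id.dotProduct (continuous_const.matrix_mulVec continuous_id)).tendsto 0).comp
        he_lim)
  refine ⟨ofReal_le_lintegral_Ioi_of_le_intervalIntegral (by fun_prop) hcost_nonneg hV ?_,
    fun hv_opt => lintegral_Ioi_ofReal_eq_of_tendsto (by fun_prop) hcost_nonneg (hV.congr' ?_)⟩
  · filter_upwards [eventually_ge_atTop 0] with T hT
    rw [hcost T hT]
    exact le_add_of_nonneg_right (integral_nonneg hT fun t _ => by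
      simpa using hS.posSemidef.dotProduct_mulVec_nonneg (v t + K₂d *ᵥ e t))
  · filter_upwards [eventually_ge_atTop 0] with T hT
    rw [hcost T hT, integral_congr (g := fun _ => 0) fun t ht => by
      simp [hv_opt t (uIcc_of_le hT ▸ ht).1], intervalIntegral.integral_zero, add_zero]

/-- **Completion of squares for the insider's best-response Riccati equation.**
With `F = A − B₁K₁*`, suppose the symmetric matrix `P°` solves
`FᵀP° + P°F + Q_a + ρK₂*ᵀK₂* − (P°B₂ + ρK₂*ᵀ)(R̃₂+ρI)⁻¹(B₂ᵀP° + ρK₂*) = 0`, and set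
`K₂° = (R̃₂+ρI)⁻¹(B₂ᵀP° + ρK₂*)`.  Then for every continuous `v`, every solution `e` of
`ė = Fe + B₂v`, and every `T > 0`, the insider cost over `[0,T]` equals
`e(0)ᵀP°e(0) − e(T)ᵀP°e(T) + ∫₀ᵀ (v + K₂°e)ᵀ(R̃₂+ρI)(v + K₂°e) dt`; hence if
`e(T) → 0` the total cost is `≥ e(0)ᵀP°e(0)`, with equality for `v = −K₂°e`. -/
theorem insider_best_response_completion_of_squares {n m : ℕ}
    (A : Matrix (Fin n) (Fin n) ℝ) (B₁ B₂ : Matrix (Fin n) (Fin m) ℝ)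
    (K₁ K₂ : Matrix (Fin m) (Fin n) ℝ)
    (F : Matrix (Fin n) (Fin n) ℝ) (hF : F = A - B₁ * K₁)
    (Qa : Matrix (Fin n) (Fin n) ℝ) (hQa : Qa.PosDef)
    (R₂t : Matrix (Fin m) (Fin m) ℝ) (hR₂t : R₂t.PosDef)
    (ρ : ℝ) (hρ : 0 < ρ)
    (Pd : Matrix (Fin n) (Fin n) ℝ) (hPdsymm : Pd.IsSymm)
    (hRic : Fᵀ * Pd + Pd * F + Qa + ρ • (K₂ᵀ * K₂)
      - (Pd * B₂ + ρ • K₂ᵀ) * (R₂t + ρ • (1 : Matrix (Fin m) (Fin m) ℝ))⁻¹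
          * (B₂ᵀ * Pd + ρ • K₂) = 0)
    (K₂d : Matrix (Fin m) (Fin n) ℝ)
    (hK₂d : K₂d = (R₂t + ρ • (1 : Matrix (Fin m) (Fin m) ℝ))⁻¹
      * (B₂ᵀ * Pd + ρ • K₂))
    (v : ℝ → Fin m → ℝ) (hv : Continuous v)
    (e : ℝ → Fin n → ℝ)
    (he : ∀ t, 0 ≤ t → HasDerivAt e (F *ᵥ e t + B₂ *ᵥ v t) t) :
    (∀ T > (0:ℝ),
      (∫ t in (0:ℝ)..T,
          (e t ⬝ᵥ Qa *ᵥ e t + v t ⬝ᵥ R₂t *ᵥ v t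
            + ρ * ((v t + K₂ *ᵥ e t) ⬝ᵥ (v t + K₂ *ᵥ e t))))
        = e 0 ⬝ᵥ Pd *ᵥ e 0 - e T ⬝ᵥ Pd *ᵥ e T
          + ∫ t in (0:ℝ)..T,
              (v t + K₂d *ᵥ e t) ⬝ᵥ
                (R₂t + ρ • (1 : Matrix (Fin m) (Fin m) ℝ)) *ᵥ (v t + K₂d *ᵥ e t)) ∧
    (Tendsto e atTop (nhds 0) →
      (ENNReal.ofReal (e 0 ⬝ᵥ Pd *ᵥ e 0)
          ≤ ∫⁻ t in Set.Ioi (0:ℝ),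
              ENNReal.ofReal (e t ⬝ᵥ Qa *ᵥ e t + v t ⬝ᵥ R₂t *ᵥ v t
                + ρ * ((v t + K₂ *ᵥ e t) ⬝ᵥ (v t + K₂ *ᵥ e t)))) ∧
      ((∀ t, 0 ≤ t → v t = -(K₂d *ᵥ e t)) →
        (∫⁻ t in Set.Ioi (0:ℝ),
            ENNReal.ofReal (e t ⬝ᵥ Qa *ᵥ e t + v t ⬝ᵥ R₂t *ᵥ v t
              + ρ * ((v t + K₂ *ᵥ e t) ⬝ᵥ (v t + K₂ *ᵥ e t))))
          = ENNReal.ofReal (e 0 ⬝ᵥ Pd *ᵥ e 0))) :=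
  insider_best_response_completion_of_squares_general B₂ K₂ F Qa hQa R₂t hR₂t ρ hρ Pd hPdsymm hRic
    K₂d hK₂d v hv e he
end

section
/- Let M ∈ ℝ^{n×n} be symmetric, Q_m ∈ ℝ^{n×n} symmetric positive definite, and let Â : [0,∞) → ℝ^{n×n} and P : [0,∞) → ℝ^{n×n} be C¹ with P(t) symmetric, satisfying Â(t)ᵀP(t) + P(t)Â(t) − P(t)MP(t) + Q_m = 0 for all t. Assume: (a) Â and P are bounded, i.e. Â, P ∈ L∞; (b) t ↦ ‖Â̇(t)‖ is in L²; and (c) there exists ν > 0 such that for every t ≥ 0 and every symmetric Q ∈ ℝ^{n×n}, any symmetric X solving XA_cl(t) + A_cl(t)ᵀX = −Q, where A_cl(t) = Â(t) − MP(t), satisfies ‖X‖ ≤ ν‖Q‖. Then t ↦ ‖Ṗ(t)‖ is in L², and t ↦ ‖Ȧ_cl(t)‖ is in L². -/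
/-! Differentiating the Riccati equation shows that `Ṗ` solves the Lyapunov equation of the
closed-loop matrix `Â − MP` with right-hand side `−(Â̇ᵀP + PÂ̇)`. The uniform Lyapunov bound and
the bound on `P` then give `‖Ṗ‖ ≤ 2|ν|C‖Â̇‖` pointwise, so `‖Ṗ‖` and
`‖Â̇ − MṖ‖ ≤ ‖Â̇‖ + ‖M‖‖Ṗ‖` inherit square-integrability from `‖Â̇‖`. -/

open Matrix MeasureTheory Filter Set Topology
open scoped Matrix.Norms.L2Operator

def Matrix.HasEntrywiseDerivAt {m n 𝕜 : Type*} [NontriviallyNormedField 𝕜]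
    (F : 𝕜 → Matrix m n 𝕜) (F' : Matrix m n 𝕜) (t : 𝕜) : Prop :=
  ∀ i j, HasDerivAt (fun s => F s i j) (F' i j) t

namespace Matrix.HasEntrywiseDerivAt

variable {l m n 𝕜 : Type*} [NontriviallyNormedField 𝕜] {t : 𝕜}

theorem const (A : Matrix m n 𝕜) (t : 𝕜) : HasEntrywiseDerivAt (fun _ => A) 0 t :=
  fun i j => hasDerivAt_const t (A i j)

theorem add {F G : 𝕜 → Matrix m n 𝕜} {F' G' : Matrix m n 𝕜}
    (hF : HasEntrywiseDerivAt F F' t) (hG : HasEntrywiseDerivAt G G' t) :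
    HasEntrywiseDerivAt (fun s => F s + G s) (F' + G') t :=
  fun i j => (hF i j).add (hG i j)

theorem sub {F G : 𝕜 → Matrix m n 𝕜} {F' G' : Matrix m n 𝕜}
    (hF : HasEntrywiseDerivAt F F' t) (hG : HasEntrywiseDerivAt G G' t) :
    HasEntrywiseDerivAt (fun s => F s - G s) (F' - G') t :=
  fun i j => (hF i j).sub (hG i j)

theorem transpose {F : 𝕜 → Matrix m n 𝕜} {F' : Matrix m n 𝕜}
    (hF : HasEntrywiseDerivAt F F' t) : HasEntrywiseDerivAt (fun s => (F s)ᵀ) F'ᵀ t :=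
  fun i j => hF j i

theorem mul [Fintype m] {F : 𝕜 → Matrix l m 𝕜} {G : 𝕜 → Matrix m n 𝕜}
    {F' : Matrix l m 𝕜} {G' : Matrix m n 𝕜}
    (hF : HasEntrywiseDerivAt F F' t) (hG : HasEntrywiseDerivAt G G' t) :
    HasEntrywiseDerivAt (fun s => F s * G s) (F' * G t + F t * G') t := by
  intro i j
  simp only [mul_apply, add_apply, ← Finset.sum_add_distrib]
  exact HasDerivAt.fun_sum fun k _ => (hF i k).mul (hG k j)

theorem unique {F : 𝕜 → Matrix m n 𝕜} {F₁' F₂' : Matrix m n 𝕜}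
    (h₁ : HasEntrywiseDerivAt F F₁' t) (h₂ : HasEntrywiseDerivAt F F₂' t) : F₁' = F₂' :=
  ext fun i j => (h₁ i j).unique (h₂ i j)

theorem congr_of_eventuallyEq {F G : 𝕜 → Matrix m n 𝕜} {F' : Matrix m n 𝕜}
    (hF : HasEntrywiseDerivAt F F' t) (h : G =ᶠ[𝓝 t] F) : HasEntrywiseDerivAt G F' t :=
  fun i j => (hF i j).congr_of_eventuallyEq (h.mono fun _ hs => congrFun (congrFun hs i) j)

theorem eq_zero_of_eventuallyEq_zero {F : 𝕜 → Matrix m n 𝕜} {F' : Matrix m n 𝕜}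
    (hF : HasEntrywiseDerivAt F F' t) (h : ∀ᶠ s in 𝓝 t, F s = 0) : F' = 0 :=
  hF.unique ((const 0 t).congr_of_eventuallyEq h)

theorem isSymm {P : 𝕜 → Matrix n n 𝕜} {P' : Matrix n n 𝕜}
    (hP : HasEntrywiseDerivAt P P' t) (h : ∀ᶠ s in 𝓝 t, (P s).IsSymm) : P'.IsSymm :=
  hP.transpose.unique (hP.congr_of_eventuallyEq (h.mono fun _ hs => hs.eq))

end Matrix.HasEntrywiseDerivAt

theorem Matrix.HasEntrywiseDerivAt.aestronglyMeasurable {m n : Type*} [Fintype m] [Fintype n]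
    [DecidableEq m] [DecidableEq n] {F F' : ℝ → Matrix m n ℝ} {s : Set ℝ} (hs : MeasurableSet s)
    (hF : ∀ t ∈ s, HasEntrywiseDerivAt F (F' t) t) :
    AEStronglyMeasurable F' (volume.restrict s) := by
  have hF' : F' =ᵐ[volume.restrict s]
      fun t => ∑ i, ∑ j, deriv (fun u => F u i j) t • single i j (1 : ℝ) := by
    refine ae_restrict_of_forall_mem hs fun t ht => ?_
    conv_lhs => rw [matrix_eq_sum_single (F' t)]
    simp only [(hF t ht _ _).deriv, smul_single, smul_eq_mul, mul_one]
  refine AEStronglyMeasurable.congr ?_ hF'.symm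
  exact Finset.aestronglyMeasurable_fun_sum _ fun i _ => Finset.aestronglyMeasurable_fun_sum _
    fun j _ => (aestronglyMeasurable_deriv (fun u => F u i j) _).smul_const (single i j (1 : ℝ))

theorem Matrix.l2_opNorm_transpose {m n : Type*} [Fintype m] [Fintype n] [DecidableEq m]
    [DecidableEq n] (A : Matrix m n ℝ) : ‖Aᵀ‖ = ‖A‖ := by
  rw [← conjTranspose_eq_transpose_of_trivial, l2_opNorm_conjTranspose]

theorem Matrix.l2_opNorm_transpose_mul_add_mul_le {n : Type*} [Fintype n] [DecidableEq n]
    (A P : Matrix n n ℝ) : ‖Aᵀ * P + P * A‖ ≤ 2 * ‖P‖ * ‖A‖ :=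
  calc ‖Aᵀ * P + P * A‖ ≤ ‖Aᵀ‖ * ‖P‖ + ‖P‖ * ‖A‖ :=
        norm_add_le_of_le (norm_mul_le _ _) (norm_mul_le _ _)
    _ = 2 * ‖P‖ * ‖A‖ := by rw [l2_opNorm_transpose]; ring

theorem Matrix.IsSymm.transpose_mul_add_mul {n R : Type*} [Fintype n] [CommSemiring R]
    {P : Matrix n n R} (hP : P.IsSymm) (A : Matrix n n R) : (Aᵀ * P + P * A).IsSymm := by
  rw [IsSymm, transpose_add, transpose_mul, transpose_mul, transpose_transpose, hP.eq, add_comm]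

theorem lyapunov_eq_of_riccati {n 𝕜 : Type*} [Fintype n] [NontriviallyNormedField 𝕜]
    {A P : 𝕜 → Matrix n n 𝕜} {A' P' M Q : Matrix n n 𝕜} {t : 𝕜} (hM : M.IsSymm)
    (hA : HasEntrywiseDerivAt A A' t) (hP : HasEntrywiseDerivAt P P' t) (hPt : (P t).IsSymm)
    (hRic : ∀ᶠ s in 𝓝 t, (A s)ᵀ * P s + P s * A s - P s * M * P s + Q = 0) :
    P' * (A t - M * P t) + (A t - M * P t)ᵀ * P' = -(A'ᵀ * P t + P t * A') := by
  have h0 := ((((hA.transpose.mul hP).add (hP.mul hA)).sub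
    ((hP.mul (.const M t)).mul hP)).add (.const Q t)).eq_zero_of_eventuallyEq_zero hRic
  rw [transpose_sub, transpose_mul, hM.eq, hPt.eq]
  exact sub_eq_zero.mp (by rw [← h0]; noncomm_ring)

theorem norm_sub_mul_le_of_norm_le {R : Type*} [NormedRing R] {a b : R} (m : R) {K : ℝ}
    (h : ‖b‖ ≤ K * ‖a‖) : ‖a - m * b‖ ≤ (1 + ‖m‖ * K) * ‖a‖ :=
  calc ‖a - m * b‖ ≤ ‖a‖ + ‖m‖ * ‖b‖ := norm_sub_le_of_le le_rfl (norm_mul_le _ _)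
    _ ≤ ‖a‖ + ‖m‖ * (K * ‖a‖) := by gcongr
    _ = (1 + ‖m‖ * K) * ‖a‖ := by ring

theorem integrableOn_norm_sq_of_norm_le {α E F : Type*} [MeasurableSpace α] {μ : Measure α}
    [NormedAddCommGroup E] [NormedAddCommGroup F] {f : α → E} {g : α → F} {s : Set α} {c : ℝ}
    (hs : MeasurableSet s) (hf : IntegrableOn (fun x => ‖f x‖ ^ 2) s μ)
    (hg : AEStronglyMeasurable g (μ.restrict s)) (hle : ∀ x ∈ s, ‖g x‖ ≤ c * ‖f x‖) :
    IntegrableOn (fun x => ‖g x‖ ^ 2) s μ := by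
  refine (hf.const_mul (c ^ 2)).mono' (hg.norm.pow 2) (ae_restrict_of_forall_mem hs fun x hx => ?_)
  rw [Real.norm_of_nonneg (by positivity), ← mul_pow]
  exact pow_le_pow_left₀ (norm_nonneg _) (hle x hx) 2

theorem riccati_derivative_square_integrable_general {n : ℕ}
    (M Qm : Matrix (Fin n) (Fin n) ℝ) (hM : M.IsSymm)
    (Ahat P Ahat' P' : ℝ → Matrix (Fin n) (Fin n) ℝ)
    (hAhatDeriv : ∀ i j t, 0 ≤ t → HasDerivAt (fun s => Ahat s i j) (Ahat' t i j) t)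
    (hPDeriv : ∀ i j t, 0 ≤ t → HasDerivAt (fun s => P s i j) (P' t i j) t)
    (hPsymm : ∀ t, 0 ≤ t → (P t).IsSymm)
    (hRic : ∀ t, 0 ≤ t → (Ahat t)ᵀ * P t + P t * Ahat t - P t * M * P t + Qm = 0)
    -- (a) `Â, P ∈ L∞`:
    (hbdd : ∃ C, ∀ t, 0 ≤ t → ‖Ahat t‖ ≤ C ∧ ‖P t‖ ≤ C)
    -- (b) `‖Â̇‖ ∈ L²`:
    (hA'L2 : MeasureTheory.IntegrableOn (fun t => ‖Ahat' t‖ ^ 2) (Set.Ici (0:ℝ)))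
    -- (c) uniform solvability bound for the Lyapunov equation:
    (ν : ℝ)
    (hLyap : ∀ t, 0 ≤ t → ∀ Q X : Matrix (Fin n) (Fin n) ℝ, Q.IsSymm → X.IsSymm →
      X * (Ahat t - M * P t) + (Ahat t - M * P t)ᵀ * X = -Q → ‖X‖ ≤ ν * ‖Q‖) :
    MeasureTheory.IntegrableOn (fun t => ‖P' t‖ ^ 2) (Set.Ici (0:ℝ)) ∧
    MeasureTheory.IntegrableOn (fun t => ‖Ahat' t - M * P' t‖ ^ 2) (Set.Ici (0:ℝ)) := by
  obtain ⟨C, hC⟩ := hbdd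
  -- The Riccati equation holds only on `[0, ∞)`, so it is differentiated at `t > 0`;
  -- `{0}` is null.
  have hA : ∀ t ∈ Ioi (0 : ℝ), HasEntrywiseDerivAt Ahat (Ahat' t) t :=
    fun t ht i j => hAhatDeriv i j t (le_of_lt ht)
  have hP : ∀ t ∈ Ioi (0 : ℝ), HasEntrywiseDerivAt P (P' t) t :=
    fun t ht i j => hPDeriv i j t (le_of_lt ht)
  have hP'le : ∀ t ∈ Ioi (0 : ℝ), ‖P' t‖ ≤ |ν| * (2 * C) * ‖Ahat' t‖ := by
    intro t ht
    have hnonneg : ∀ᶠ s in 𝓝 t, 0 ≤ s := (eventually_gt_nhds ht).mono fun _ => le_of_lt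
    have hPt := hPsymm t (le_of_lt ht)
    calc ‖P' t‖ ≤ ν * ‖(Ahat' t)ᵀ * P t + P t * Ahat' t‖ :=
          hLyap t (le_of_lt ht) _ _ (hPt.transpose_mul_add_mul _)
            ((hP t ht).isSymm (hnonneg.mono hPsymm))
            (lyapunov_eq_of_riccati hM (hA t ht) (hP t ht) hPt (hnonneg.mono hRic))
      _ ≤ |ν| * (2 * ‖P t‖ * ‖Ahat' t‖) :=
          mul_le_mul (le_abs_self ν) (l2_opNorm_transpose_mul_add_mul_le _ _) (norm_nonneg _)
            (abs_nonneg ν)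
      _ ≤ |ν| * (2 * C) * ‖Ahat' t‖ := by
          rw [mul_assoc |ν|]; gcongr; exact (hC t (le_of_lt ht)).2
  have hAmeas := HasEntrywiseDerivAt.aestronglyMeasurable measurableSet_Ioi hA
  have hPmeas := HasEntrywiseDerivAt.aestronglyMeasurable measurableSet_Ioi hP
  rw [integrableOn_Ici_iff_integrableOn_Ioi] at hA'L2
  rw [integrableOn_Ici_iff_integrableOn_Ioi, integrableOn_Ici_iff_integrableOn_Ioi]
  exact ⟨integrableOn_norm_sq_of_norm_le measurableSet_Ioi hA'L2 hPmeas hP'le,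
    integrableOn_norm_sq_of_norm_le measurableSet_Ioi hA'L2 (hAmeas.sub (hPmeas.const_mul M))
      fun t ht => norm_sub_mul_le_of_norm_le M (hP'le t ht)⟩

/-- **Square-integrability of the Riccati solution's derivative.**  Suppose symmetric
`P(t)` and `Â(t)` are C¹ and satisfy `Â(t)ᵀP(t) + P(t)Â(t) − P(t)MP(t) + Q_m = 0` with
`M` symmetric and `Q_m ≻ 0`.  If `Â, P ∈ L∞`, `‖Â̇‖ ∈ L²`, and solutions of the
Lyapunov equation for `A_cl(t) = Â(t) − MP(t)` satisfy a uniform bound `‖X‖ ≤ ν‖Q‖`,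
then `‖Ṗ‖ ∈ L²` and `‖Ȧ_cl‖ ∈ L²`. -/
theorem riccati_derivative_square_integrable {n : ℕ}
    (M Qm : Matrix (Fin n) (Fin n) ℝ) (hM : M.IsSymm) (hQm : Qm.PosDef)
    (Ahat P Ahat' P' : ℝ → Matrix (Fin n) (Fin n) ℝ)
    (hAhatDeriv : ∀ i j t, 0 ≤ t → HasDerivAt (fun s => Ahat s i j) (Ahat' t i j) t)
    (hPDeriv : ∀ i j t, 0 ≤ t → HasDerivAt (fun s => P s i j) (P' t i j) t)
    (hAhat'cont : Continuous Ahat') (hP'cont : Continuous P')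
    (hPsymm : ∀ t, 0 ≤ t → (P t).IsSymm)
    (hRic : ∀ t, 0 ≤ t → (Ahat t)ᵀ * P t + P t * Ahat t - P t * M * P t + Qm = 0)
    -- (a) `Â, P ∈ L∞`:
    (hbdd : ∃ C, ∀ t, 0 ≤ t → ‖Ahat t‖ ≤ C ∧ ‖P t‖ ≤ C)
    -- (b) `‖Â̇‖ ∈ L²`:
    (hA'L2 : MeasureTheory.IntegrableOn (fun t => ‖Ahat' t‖ ^ 2) (Set.Ici (0:ℝ)))
    -- (c) uniform solvability bound for the Lyapunov equation:
    (ν : ℝ) (hν : 0 < ν)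
    (hLyap : ∀ t, 0 ≤ t → ∀ Q X : Matrix (Fin n) (Fin n) ℝ, Q.IsSymm → X.IsSymm →
      X * (Ahat t - M * P t) + (Ahat t - M * P t)ᵀ * X = -Q → ‖X‖ ≤ ν * ‖Q‖) :
    MeasureTheory.IntegrableOn (fun t => ‖P' t‖ ^ 2) (Set.Ici (0:ℝ)) ∧
    MeasureTheory.IntegrableOn (fun t => ‖Ahat' t - M * P' t‖ ^ 2) (Set.Ici (0:ℝ)) :=
  riccati_derivative_square_integrable_general M Qm hM Ahat P Ahat' P' hAhatDeriv hPDeriv hPsymm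
    hRic hbdd hA'L2 ν hLyap
end
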